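/- arXiv:2301.09433 — 7 statements merged into one kernel-verified Lean document; each statement's English description precedes it below -/
import Mathlib

section
/- If n is a positive integer with exactly k distinct prime factors, then the ring ZMod n has exactly 2^k idempotent elements. -/
/-- Vertices of the clean graph `Cl₂(R)`: pairs `(e, u)` with `e` a nonzero
idempotent of `R` and `u` a unit of `R`. -/
def cleanVertex (R : Type*) [Ring R] : Type _ := {e : R // e * e = e ∧ e ≠ 0} × Rˣ

/-- The graph `Cl₂(R)`: distinct vertices `(e,u)`, `(f,v)` are adjacent iff
`ef = fe = 0` or `uv = vu = 1`. -/
def cleanGraph (R : Type*) [Ring R] : SimpleGraph (cleanVertex R) :=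
  SimpleGraph.fromRel (fun x y =>
    (x.1.1 * y.1.1 = 0 ∧ y.1.1 * x.1.1 = 0) ∨
    ((x.2 : R) * (y.2 : R) = 1 ∧ (y.2 : R) * (x.2 : R) = 1))

/-- Wiener index: sum of distances over unordered pairs of vertices. -/
noncomputable def wienerIndex {V : Type*} (G : SimpleGraph V) : ℕ :=
  (∑ᶠ x : V, ∑ᶠ y : V, G.dist x y) / 2

/-- Matching number: maximum size of a matching. -/
noncomputable def matchingNumber {V : Type*} (G : SimpleGraph V) : ℕ :=
  sSup {k | ∃ M : G.Subgraph, M.IsMatching ∧ M.edgeSet.ncard = k}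

lemma idem_zmod_pp (p k : ℕ) (hp : p.Prime) (hk : 0 < k) (e : ZMod (p ^ k))
    (he : e * e = e) : e = 0 ∨ e = 1 := by
  haveI : NeZero (p ^ k) := ⟨pow_ne_zero _ hp.ne_zero⟩
  obtain ⟨m, rfl⟩ := ZMod.natCast_zmod_surjective (n := p ^ k) e
  by_cases hu : IsUnit ((m : ℕ) : ZMod (p ^ k))
  · right
    exact hu.mul_left_cancel (by rw [he, mul_one])
  · left
    rw [ZMod.isUnit_iff_coprime, Nat.coprime_pow_right_iff hk, Nat.coprime_comm,
      Nat.Prime.coprime_iff_not_dvd hp, not_not] at hu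
    have hek : ((m : ℕ) : ZMod (p ^ k)) ^ k = ((m : ℕ) : ZMod (p ^ k)) := by
      have : IsIdempotentElem ((m : ℕ) : ZMod (p ^ k)) := he
      obtain ⟨k, rfl⟩ := Nat.exists_eq_succ_of_ne_zero hk.ne'
      exact this.pow_succ_eq k
    rw [← hek, ← Nat.cast_pow, ZMod.natCast_eq_zero_iff]
    exact pow_dvd_pow_of_dvd hu k

lemma card_idem_pp (p k : ℕ) (hp : p.Prime) (hk : 0 < k) :
    Nat.card {e : ZMod (p ^ k) // e * e = e} = 2 := by
  haveI : NeZero (p ^ k) := ⟨pow_ne_zero _ hp.ne_zero⟩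
  haveI : Fact (1 < p ^ k) := ⟨one_lt_pow₀ hp.one_lt hk.ne'⟩
  have : {e : ZMod (p ^ k) // e * e = e} ≃ ({0, 1} : Set (ZMod (p ^ k))) := by
    apply Equiv.subtypeEquiv (Equiv.refl _)
    intro e
    simp only [Equiv.refl_apply, Set.mem_insert_iff, Set.mem_singleton_iff]
    constructor
    · exact idem_zmod_pp p k hp hk e
    · rintro (rfl | rfl) <;> ring
  rw [Nat.card_congr this]
  rw [Nat.card_coe_set_eq, Set.ncard_pair (by exact zero_ne_one)]

def idem_equiv_of_ringEquiv {R S : Type*} [Ring R] [Ring S] (f : R ≃+* S) :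
    {e : R // e * e = e} ≃ {e : S // e * e = e} := by
  apply Equiv.subtypeEquiv f.toEquiv
  intro e
  constructor
  · intro h
    simp only [RingEquiv.toEquiv_eq_coe, EquivLike.coe_coe, ← map_mul, h]
  · intro h
    apply f.injective
    simpa [← map_mul] using h

theorem idempotents_count (n : ℕ) (hn : 1 ≤ n) :
    Nat.card {e : ZMod n // e * e = e} = 2 ^ n.primeFactors.card := by
  have hn0 : n ≠ 0 := by omega
  set a : n.primeFactors → ℕ := fun p => (p : ℕ) ^ n.factorization p with ha
  have hco : Pairwise (Function.onFun Nat.Coprime a) := by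
    intro p q hpq
    exact Nat.Coprime.pow _ _ ((Nat.coprime_primes (Nat.prime_of_mem_primeFactors p.2)
      (Nat.prime_of_mem_primeFactors q.2)).mpr (fun h => hpq (Subtype.ext h)))
  have hprod : ∏ p : n.primeFactors, a p = n := by
    exact (Finset.prod_coe_sort _ _).trans (Nat.factorization_prod_pow_eq_self hn0)
  have f : ZMod n ≃+* Π p : n.primeFactors, ZMod (a p) :=
    (ZMod.ringEquivCongr hprod.symm).trans (ZMod.prodEquivPi a hco)
  rw [Nat.card_congr (idem_equiv_of_ringEquiv f)]
  have g : {e : Π p : n.primeFactors, ZMod (a p) // e * e = e} ≃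
      Π p : n.primeFactors, {x : ZMod (a p) // x * x = x} :=
    (Equiv.subtypeEquiv (Equiv.refl _) (by intro e; simp [funext_iff])).trans
      (Equiv.subtypePiEquivPi)
  rw [Nat.card_congr g, Nat.card_pi]
  have : ∀ p : n.primeFactors, Nat.card {x : ZMod (a p) // x * x = x} = 2 := by
    intro p
    exact card_idem_pp p (n.factorization p) (Nat.prime_of_mem_primeFactors p.2)
      (Nat.Prime.factorization_pos_of_dvd (Nat.prime_of_mem_primeFactors p.2) hn0
        (Nat.dvd_of_mem_primeFactors p.2))
  simp only [this, Finset.prod_const, Finset.card_univ, Fintype.card_coe]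
end

section
/- If a ring R has a nontrivial idempotent (an idempotent e with e ≠ 0 and e ≠ 1), then the graph Cl₂(R) is connected and its diameter is at most 3. -/
section Aux

variable {R : Type*} [Ring R]

lemma cleanVertex_ne (a b : cleanVertex R) (h : a.1.1 ≠ b.1.1) : a ≠ b :=
  fun hab => h (by rw [hab])

lemma cleanGraph_adj (a b : cleanVertex R) (hne : a ≠ b)
    (h : (a.1.1 * b.1.1 = 0 ∧ b.1.1 * a.1.1 = 0) ∨
      ((a.2 : R) * (b.2 : R) = 1 ∧ (b.2 : R) * (a.2 : R) = 1)) :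
    (cleanGraph R).Adj a b := by
  rw [cleanGraph, SimpleGraph.fromRel_adj]
  exact ⟨hne, Or.inl h⟩

/-- "equal or adjacent" predicate -/
def EA (a b : cleanVertex R) : Prop := a = b ∨ (cleanGraph R).Adj a b

lemma EA.reachable {a b : cleanVertex R} (h : EA a b) : (cleanGraph R).Reachable a b := by
  rcases h with h | h
  · exact h ▸ SimpleGraph.Reachable.refl a
  · exact h.reachable

lemma EA.edist_le_one {a b : cleanVertex R} (h : EA a b) : (cleanGraph R).edist a b ≤ 1 := by
  rcases h with h | h
  · subst h; simp [SimpleGraph.edist_self]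
  · simpa using SimpleGraph.edist_le h.toWalk

lemma chain3 {x a b y : cleanVertex R} (h1 : EA x a) (h2 : EA a b) (h3 : EA b y) :
    (cleanGraph R).Reachable x y ∧ (cleanGraph R).edist x y ≤ 3 := by
  refine ⟨(h1.reachable.trans h2.reachable).trans h3.reachable, ?_⟩
  calc (cleanGraph R).edist x y
      ≤ (cleanGraph R).edist x a + (cleanGraph R).edist a y :=
        SimpleGraph.edist_triangle
    _ ≤ (cleanGraph R).edist x a + ((cleanGraph R).edist a b + (cleanGraph R).edist b y) :=
        add_le_add (le_refl _) SimpleGraph.edist_triangle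
    _ ≤ 1 + (1 + 1) := by
        exact add_le_add h1.edist_le_one (add_le_add h2.edist_le_one h3.edist_le_one)
    _ = 3 := by norm_num

/-- complement vertex for a nontrivial idempotent -/
lemma compl_idem {f : R} (hf : f * f = f) :
    f * (1 - f) = 0 ∧ (1 - f) * f = 0 ∧ (1 - f) * (1 - f) = 1 - f := by
  have h1 : f * (1 - f) = 0 := by rw [mul_sub, mul_one, hf, sub_self]
  have h2 : (1 - f) * f = 0 := by rw [sub_mul, one_mul, hf, sub_self]
  exact ⟨h1, h2, by rw [mul_sub, mul_one, h2, sub_zero]⟩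

lemma ne_compl {f : R} (hf : f * f = f) (hf0 : f ≠ 0) : f ≠ 1 - f := by
  intro h
  apply hf0
  have := (compl_idem hf).1
  rw [← h] at this
  rw [← hf, this]

end Aux

theorem cleanGraph_connected_of_nontrivial_idempotent (R : Type*) [Ring R]
    (e : R) (he : e * e = e) (he0 : e ≠ 0) (he1 : e ≠ 1) :
    (cleanGraph R).Connected ∧ (cleanGraph R).diam ≤ 3 := by
  obtain ⟨hec1, hec2, hec3⟩ := compl_idem he
  have hene : (1 : R) - e ≠ 0 := sub_ne_zero.mpr (Ne.symm he1)
  have key : ∀ x y : cleanVertex R,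
      (cleanGraph R).Reachable x y ∧ (cleanGraph R).edist x y ≤ 3 := by
    rintro ⟨⟨f, hf, hf0⟩, u⟩ ⟨⟨g, hg, hg0⟩, v⟩
    by_cases hf1 : f = 1 <;> by_cases hg1 : g = 1
    · -- f = 1, g = 1 : x ~ (e, u⁻¹) ~ (1-e, v⁻¹) ~ y
      subst hf1; subst hg1
      refine chain3 (x := (⟨1, hf, hf0⟩, u)) (a := (⟨e, he, he0⟩, u⁻¹))
        (b := (⟨1 - e, hec3, hene⟩, v⁻¹)) (y := (⟨1, hg, hg0⟩, v)) ?_ ?_ ?_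
      · exact Or.inr (cleanGraph_adj _ _ (cleanVertex_ne _ _ (Ne.symm he1))
          (Or.inr ⟨by simp, by simp⟩))
      · exact Or.inr (cleanGraph_adj _ _ (cleanVertex_ne _ _ (ne_compl he he0))
          (Or.inl ⟨hec1, hec2⟩))
      · refine Or.inr (cleanGraph_adj _ _ (cleanVertex_ne _ _ ?_) (Or.inr ⟨by simp, by simp⟩))
        intro h
        exact he0 (sub_eq_self.mp h)
    · -- f = 1, g ≠ 1 : x ~ (1-g, u⁻¹) ~ y
      subst hf1
      obtain ⟨hgc1, hgc2, hgc3⟩ := compl_idem hg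
      have hgne : (1 : R) - g ≠ 0 := sub_ne_zero.mpr (Ne.symm hg1)
      refine chain3 (a := (⟨1 - g, hgc3, hgne⟩, u⁻¹)) (b := (⟨g, hg, hg0⟩, v)) ?_ ?_
        (Or.inl rfl)
      · refine Or.inr (cleanGraph_adj _ _ (cleanVertex_ne _ _ ?_) (Or.inr ⟨by simp, by simp⟩))
        intro h
        exact hg0 (sub_eq_self.mp h.symm)
      · exact Or.inr (cleanGraph_adj _ _ (cleanVertex_ne _ _ (Ne.symm (ne_compl hg hg0)))
          (Or.inl ⟨hgc2, hgc1⟩))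
    · -- f ≠ 1, g = 1 : x ~ (1-f, v⁻¹) ~ y
      subst hg1
      obtain ⟨hfc1, hfc2, hfc3⟩ := compl_idem hf
      have hfne : (1 : R) - f ≠ 0 := sub_ne_zero.mpr (Ne.symm hf1)
      refine chain3 (a := (⟨1 - f, hfc3, hfne⟩, v⁻¹)) (b := (⟨1, hg, hg0⟩, v)) ?_ ?_
        (Or.inl rfl)
      · exact Or.inr (cleanGraph_adj _ _ (cleanVertex_ne _ _ (ne_compl hf hf0))
          (Or.inl ⟨hfc1, hfc2⟩))
      · refine Or.inr (cleanGraph_adj _ _ (cleanVertex_ne _ _ ?_) (Or.inr ⟨by simp, by simp⟩))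
        intro h
        exact hf0 (sub_eq_self.mp h)
    · -- f ≠ 1, g ≠ 1 : x ~ (1-f, 1) ~ (1-g, 1) ~ y
      obtain ⟨hfc1, hfc2, hfc3⟩ := compl_idem hf
      obtain ⟨hgc1, hgc2, hgc3⟩ := compl_idem hg
      have hfne : (1 : R) - f ≠ 0 := sub_ne_zero.mpr (Ne.symm hf1)
      have hgne : (1 : R) - g ≠ 0 := sub_ne_zero.mpr (Ne.symm hg1)
      refine chain3 (a := (⟨1 - f, hfc3, hfne⟩, 1)) (b := (⟨1 - g, hgc3, hgne⟩, 1)) ?_ ?_ ?_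
      · exact Or.inr (cleanGraph_adj _ _ (cleanVertex_ne _ _ (ne_compl hf hf0))
          (Or.inl ⟨hfc1, hfc2⟩))
      · by_cases hab : ((⟨1 - f, hfc3, hfne⟩, 1) : cleanVertex R) = (⟨1 - g, hgc3, hgne⟩, 1)
        · exact Or.inl hab
        · exact Or.inr (cleanGraph_adj _ _ hab (Or.inr ⟨by simp, by simp⟩))
      · exact Or.inr (cleanGraph_adj _ _ (cleanVertex_ne _ _ (Ne.symm (ne_compl hg hg0)))
          (Or.inl ⟨hgc2, hgc1⟩))
  constructor
  · haveI : Nonempty (cleanVertex R) := ⟨(⟨e, he, he0⟩, 1)⟩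
    exact ⟨fun x y => (key x y).1⟩
  · have hediam : (cleanGraph R).ediam ≤ 3 :=
      SimpleGraph.ediam_le_of_edist_le fun u v => (key u v).2
    calc (cleanGraph R).diam = (cleanGraph R).ediam.toNat := rfl
      _ ≤ (3 : ℕ∞).toNat := ENat.toNat_le_toNat hediam (by simp)
      _ = 3 := by simp
end

section
/- Let n be a positive integer with at least two distinct prime factors. Then the diameter of Cl₂(ZMod n) equals 3. -/
section Aux

lemma cleanGraph_adj_iff {R : Type*} [CommRing R] {x y : cleanVertex R} :
    (cleanGraph R).Adj x y ↔ x ≠ y ∧ (x.1.1 * y.1.1 = 0 ∨ (x.2 : R) * (y.2 : R) = 1) := by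
  rw [cleanGraph, SimpleGraph.fromRel_adj]
  constructor
  · rintro ⟨hne, (⟨h1, h2⟩ | ⟨h1, h2⟩) | (⟨h1, h2⟩ | ⟨h1, h2⟩)⟩
    exacts [⟨hne, Or.inl h1⟩, ⟨hne, Or.inr h1⟩, ⟨hne, Or.inl h2⟩, ⟨hne, Or.inr h2⟩]
  · rintro ⟨hne, (h | h)⟩
    · exact ⟨hne, Or.inl (Or.inl ⟨h, by rw [mul_comm]; exact h⟩)⟩
    · exact ⟨hne, Or.inl (Or.inr ⟨h, by rw [mul_comm]; exact h⟩)⟩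

lemma exists_nontrivial_idem (n : ℕ) (h : 2 ≤ n.primeFactors.card) :
    ∃ ε : ZMod n, ε * ε = ε ∧ ε ≠ 0 ∧ ε ≠ 1 := by
  obtain ⟨p, hp, q, hq, hpq⟩ := Finset.one_lt_card.mp h
  rw [Nat.mem_primeFactors] at hp hq
  obtain ⟨hp, hpn, hn0⟩ := hp
  obtain ⟨hq, hqn, -⟩ := hq
  set a := p ^ n.factorization p with ha
  set b := n / a with hb
  have hab : a * b = n := Nat.ordProj_mul_ordCompl_eq_self n p
  have hco : a.Coprime b := (Nat.coprime_ordCompl hp hn0).pow_left _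
  have hpa : p ∣ a :=
    dvd_pow_self p (Nat.Prime.factorization_pos_of_dvd hp hn0 hpn).ne'
  have ha1 : 1 < a := hp.one_lt.trans_le (Nat.le_of_dvd (Nat.ordProj_pos n p) hpa)
  have hqa : ¬ q ∣ a := fun hd =>
    hpq ((Nat.prime_dvd_prime_iff_eq hq hp).mp (hq.dvd_of_dvd_pow hd)).symm
  have hqb : q ∣ b :=
    ((Nat.Prime.coprime_iff_not_dvd hq).mpr hqa).dvd_of_dvd_mul_left (hab ▸ hqn)
  have hb0 : 0 < b := Nat.pos_of_ne_zero (by rintro h0; rw [h0, mul_zero] at hab; exact hn0 hab.symm)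
  have hb1 : 1 < b := lt_of_lt_of_le hq.one_lt (Nat.le_of_dvd hb0 hqb)
  obtain ⟨k, hk1, hk0⟩ := Nat.chineseRemainder hco 1 0
  have hadvd : a ∣ n := Dvd.intro _ hab.symm.symm
  have hbdvd : b ∣ n := Dvd.intro_left _ hab
  refine ⟨(k : ZMod n), ?_, ?_, ?_⟩
  · rw [← Nat.cast_mul, ZMod.natCast_eq_natCast_iff, ← hab]
    refine (Nat.modEq_and_modEq_iff_modEq_mul hco).mp ⟨?_, ?_⟩
    · calc k * k ≡ 1 * 1 [MOD a] := hk1.mul hk1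
        _ = 1 := one_mul 1
        _ ≡ k [MOD a] := hk1.symm
    · calc k * k ≡ 0 * 0 [MOD b] := hk0.mul hk0
        _ = 0 := mul_zero 0
        _ ≡ k [MOD b] := hk0.symm
  · intro h0
    rw [ZMod.natCast_eq_zero_iff] at h0
    have hka : k ≡ 0 [MOD a] := (Nat.modEq_zero_iff_dvd).mpr (dvd_trans hadvd h0)
    have h10 : (1 : ℕ) ≡ 0 [MOD a] := hk1.symm.trans hka
    have : a ∣ 1 := (Nat.modEq_zero_iff_dvd).mp h10
    exact absurd (Nat.le_of_dvd one_pos this) (by omega)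
  · intro h1
    have h1' : (k : ZMod n) = ((1 : ℕ) : ZMod n) := by simpa using h1
    rw [ZMod.natCast_eq_natCast_iff] at h1'
    have hkb : k ≡ 1 [MOD b] := h1'.of_dvd hbdvd
    have h01 : (0 : ℕ) ≡ 1 [MOD b] := hk0.symm.trans hkb
    have : b ∣ 1 := (Nat.modEq_iff_dvd' (by norm_num)).mp h01
    exact absurd (Nat.le_of_dvd one_pos this) (by omega)

lemma exists_mid_of_walk_length_two {V : Type*} {G : SimpleGraph V} {x y : V}
    (w : G.Walk x y) (hw : w.length = 2) : ∃ z, G.Adj x z ∧ G.Adj z y := by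
  cases w with
  | nil => simp at hw
  | cons h1 q =>
    cases q with
    | nil => simp at hw
    | cons h2 q' =>
      cases q' with
      | nil => exact ⟨_, h1, h2⟩
      | cons h3 q'' => simp [SimpleGraph.Walk.length_cons] at hw

lemma cleanGraph_edist_le_three {n : ℕ} (x y : cleanVertex (ZMod n)) (c : ZMod n)
    (hc : c * c = c) (hc0 : c ≠ 0) (hc1 : c ≠ 1)
    (hce : c ≠ x.1.1) (hcf : 1 - c ≠ y.1.1) :
    (cleanGraph (ZMod n)).edist x y ≤ 3 := by
  have hcompl : c * (1 - c) = 0 := by linear_combination -hc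
  have hcsub : c ≠ 1 - c := by
    intro hcc
    apply hc0
    calc c = c * c := hc.symm
      _ = c * (1 - c) := by rw [← hcc]
      _ = 0 := hcompl
  have h1c : (1 - c) * (1 - c) = 1 - c := by linear_combination hc
  have h1c0 : (1 - c) ≠ 0 := sub_ne_zero.mpr (Ne.symm hc1)
  set m1 : cleanVertex (ZMod n) := (⟨c, hc, hc0⟩, x.2⁻¹) with hm1
  set m2 : cleanVertex (ZMod n) := (⟨1 - c, h1c, h1c0⟩, y.2⁻¹) with hm2
  have adj1 : (cleanGraph (ZMod n)).Adj x m1 := cleanGraph_adj_iff.mpr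
    ⟨fun hxy => hce (congrArg (fun z : cleanVertex (ZMod n) => z.1.1) hxy).symm,
     Or.inr (Units.mul_inv x.2)⟩
  have adj2 : (cleanGraph (ZMod n)).Adj m1 m2 := cleanGraph_adj_iff.mpr
    ⟨fun hxy => hcsub (congrArg (fun z : cleanVertex (ZMod n) => z.1.1) hxy),
     Or.inl hcompl⟩
  have adj3 : (cleanGraph (ZMod n)).Adj m2 y := cleanGraph_adj_iff.mpr
    ⟨fun hxy => hcf (congrArg (fun z : cleanVertex (ZMod n) => z.1.1) hxy),
     Or.inr (Units.inv_mul y.2)⟩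
  have hw := SimpleGraph.edist_le
    (SimpleGraph.Walk.cons adj1 (SimpleGraph.Walk.cons adj2 adj3.toWalk))
  simpa using hw

end Aux

theorem cleanGraph_diam_eq_three (n : ℕ) (h : 2 ≤ n.primeFactors.card) :
    (cleanGraph (ZMod n)).diam = 3 := by
  have hn1 : 1 < n := by
    by_contra hn
    push_neg at hn
    interval_cases n <;> simp_all
  haveI : Fact (1 < n) := ⟨hn1⟩
  have h2n : ¬ (n ∣ 2) := by
    intro hd
    have hle := Nat.le_of_dvd (by norm_num) hd
    interval_cases n
    rw [Nat.Prime.primeFactors Nat.prime_two] at h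
    simp at h
  have neg_ne : (-1 : ZMod n) ≠ 1 := by
    intro h1
    apply h2n
    have h2 : ((2 : ℕ) : ZMod n) = 0 := by push_cast; linear_combination -h1
    exact (ZMod.natCast_eq_zero_iff 2 n).mp h2
  obtain ⟨ε, hε, hε0, hε1⟩ := exists_nontrivial_idem n h
  have key : ∀ x y : cleanVertex (ZMod n), (cleanGraph (ZMod n)).edist x y ≤ 3 := by
    intro x y
    obtain ⟨⟨e, he, he0⟩, u⟩ := x
    obtain ⟨⟨f, hf, hf0⟩, v⟩ := y
    by_cases hef : e = f
    · by_cases he1 : e = 1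
      · refine cleanGraph_edist_le_three _ _ ε hε hε0 hε1 ?_ ?_
        · show ε ≠ e
          rw [he1]; exact hε1
        · show 1 - ε ≠ f
          rw [← hef, he1]
          intro hh
          exact hε0 (by linear_combination -hh)
      · subst hef
        have h1e : (1 - e) * (1 - e) = 1 - e := by linear_combination he
        have h1e0 : 1 - e ≠ 0 := sub_ne_zero.mpr (Ne.symm he1)
        have hcompl : e * (1 - e) = 0 := by linear_combination -he
        have hene : e ≠ 1 - e := by
          intro hcc
          apply he0
          calc e = e * e := he.symm
            _ = e * (1 - e) := by rw [← hcc]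
            _ = 0 := hcompl
        set m : cleanVertex (ZMod n) := (⟨1 - e, h1e, h1e0⟩, u) with hm
        have adj1 : (cleanGraph (ZMod n)).Adj (⟨e, he, he0⟩, u) m := cleanGraph_adj_iff.mpr
          ⟨fun hh => hene (congrArg (fun z : cleanVertex (ZMod n) => z.1.1) hh),
           Or.inl hcompl⟩
        have adj2 : (cleanGraph (ZMod n)).Adj m (⟨e, hf, hf0⟩, v) := cleanGraph_adj_iff.mpr
          ⟨fun hh => hene (congrArg (fun z : cleanVertex (ZMod n) => z.1.1) hh).symm,
           Or.inl (by rw [mul_comm]; exact hcompl)⟩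
        have hw := SimpleGraph.edist_le (SimpleGraph.Walk.cons adj1 adj2.toWalk)
        refine le_trans (by simpa using hw) ?_
        exact_mod_cast (show (SimpleGraph.Walk.cons adj1 adj2.toWalk).length ≤ 3 from Nat.le_succ 2)
    · by_cases hcase : ε = e ∨ ε = 1 - f
      · have hc : (1 - ε) * (1 - ε) = 1 - ε := by linear_combination hε
        have hc0 : 1 - ε ≠ 0 := sub_ne_zero.mpr (Ne.symm hε1)
        have hc1 : 1 - ε ≠ 1 := fun hh => hε0 (by linear_combination -hh)
        have hεcompl : ε * (1 - ε) = 0 := by linear_combination -hε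
        have hεne : ε ≠ 1 - ε := by
          intro hcc
          apply hε0
          calc ε = ε * ε := hε.symm
            _ = ε * (1 - ε) := by rw [← hcc]
            _ = 0 := hεcompl
        refine cleanGraph_edist_le_three _ _ (1 - ε) hc hc0 hc1 ?_ ?_
        · show 1 - ε ≠ e
          rcases hcase with h1 | h1
          · rw [← h1]; exact hεne.symm
          · intro hh
            apply hef
            rw [← hh, h1]; ring
        · show 1 - (1 - ε) ≠ f
          intro hh
          have hef' : ε = f := by linear_combination hh
          rcases hcase with h1 | h1
          · exact hef (h1.symm.trans hef')
          · apply hf0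
            have hf1 : f = 1 - f := hef' ▸ h1
            calc f = f * f := hf.symm
              _ = f * (1 - f) := by rw [← hf1]
              _ = 0 := by linear_combination -hf
      · push_neg at hcase
        refine cleanGraph_edist_le_three _ _ ε hε hε0 hε1 hcase.1 ?_
        show 1 - ε ≠ f
        intro hh
        exact hcase.2 (by linear_combination -hh)
  set x₀ : cleanVertex (ZMod n) := (⟨1, one_mul 1, one_ne_zero⟩, 1) with hx₀
  set y₀ : cleanVertex (ZMod n) := (⟨1, one_mul 1, one_ne_zero⟩, -1) with hy₀
  have hxy : x₀ ≠ y₀ := by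
    intro hh
    have h2 := congrArg (fun z : cleanVertex (ZMod n) => ((z.2 : (ZMod n)ˣ) : ZMod n)) hh
    simp [hx₀, hy₀] at h2
    exact neg_ne h2.symm
  have hnadj : ¬ (cleanGraph (ZMod n)).Adj x₀ y₀ := by
    rw [cleanGraph_adj_iff]
    rintro ⟨-, hrel | hrel⟩
    · rw [hx₀, hy₀] at hrel
      simp at hrel
    · rw [hx₀, hy₀] at hrel
      simp at hrel
      exact neg_ne hrel
  have hmid : ∀ z : cleanVertex (ZMod n),
      (cleanGraph (ZMod n)).Adj x₀ z → (cleanGraph (ZMod n)).Adj z y₀ → False := by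
    intro z h1 h2
    rw [cleanGraph_adj_iff] at h1 h2
    obtain ⟨-, h1⟩ := h1
    obtain ⟨-, h2⟩ := h2
    rcases h1 with h1 | h1
    · exact z.1.2.2 (by simpa [hx₀] using h1)
    rcases h2 with h2 | h2
    · exact z.1.2.2 (by simpa [hy₀] using h2)
    rw [hx₀] at h1
    rw [hy₀] at h2
    simp only [Units.val_one, one_mul] at h1
    simp only [Units.val_neg, Units.val_one] at h2
    exact neg_ne (by linear_combination h2 + h1)
  have hdist3 : (cleanGraph (ZMod n)).edist x₀ y₀ = 3 := by
    have hle := key x₀ y₀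
    have hne_top : (cleanGraph (ZMod n)).edist x₀ y₀ ≠ ⊤ := fun hh => by
      rw [hh] at hle
      exact absurd hle (by simp)
    obtain ⟨k, hk, hk3⟩ : ∃ k : ℕ, (cleanGraph (ZMod n)).edist x₀ y₀ = (k : ℕ∞) ∧ k ≤ 3 := by
      lift (cleanGraph (ZMod n)).edist x₀ y₀ to ℕ using hne_top with k hk
      exact ⟨k, rfl, by exact_mod_cast hle⟩
    have hk0 : k ≠ 0 := by
      rintro rfl
      rw [Nat.cast_zero] at hk
      exact hxy (SimpleGraph.edist_eq_zero_iff.mp hk)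
    have hk1 : k ≠ 1 := by
      rintro rfl
      rw [Nat.cast_one] at hk
      exact hnadj (SimpleGraph.edist_eq_one_iff_adj.mp hk)
    have hk2 : k ≠ 2 := by
      rintro rfl
      obtain ⟨w, hw⟩ := SimpleGraph.exists_walk_of_edist_eq_coe hk
      obtain ⟨z, hz1, hz2⟩ := exists_mid_of_walk_length_two w hw
      exact hmid z hz1 hz2
    have hk4 : k = 3 := by omega
    rw [hk, hk4]
    rfl
  have hediam : (cleanGraph (ZMod n)).ediam = 3 :=
    le_antisymm (SimpleGraph.ediam_le_of_edist_le key)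
      (hdist3 ▸ SimpleGraph.edist_le_ediam)
  rw [SimpleGraph.diam, hediam]
  rfl
end

section
/- Let n have at least two distinct prime factors. In Cl₂(ZMod n), if (e,u) and (f,v) are distinct vertices with e = f ≠ 1 and u*v ≠ 1, then the distance between (e,u) and (f,v) equals 2. -/
/-!
The vertex `(1 - e, 1)` is a common neighbour of `(e, u)` and `(e, v)`, since `e (1 - e) = 0`;
it is a vertex because `e ≠ 1`, and distinct from both because `e = 1 - e` would force
`e = e (1 - e) = 0`. On the other hand `(e, u)` and `(e, v)` are not adjacent, as `e² = e ≠ 0`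
and `uv ≠ 1`.
-/

namespace cleanGraph

variable {R : Type*} [Ring R]

def oneSubIdempotent (e : {e : R // e * e = e ∧ e ≠ 0}) (he : e.1 ≠ 1) :
    {e : R // e * e = e ∧ e ≠ 0} :=
  ⟨1 - e.1, IsIdempotentElem.one_sub e.2.1, sub_ne_zero.2 he.symm⟩

lemma ne_one_sub_self {e : R} (hidem : IsIdempotentElem e) (he : e ≠ 0) : e ≠ 1 - e := by
  intro h
  apply he
  calc e = e * (1 - e) := by rw [← h, hidem.eq]
    _ = 0 := hidem.mul_one_sub_self

lemma adj_of_mul_eq_zero {x y : cleanVertex R} (hxy : x ≠ y)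
    (h : x.1.1 * y.1.1 = 0) (h' : y.1.1 * x.1.1 = 0) : (cleanGraph R).Adj x y :=
  ⟨hxy, .inl (.inl ⟨h, h'⟩)⟩

lemma not_adj_of_fst_eq {x y : cleanVertex R} (he : x.1 = y.1)
    (huv : (x.2 : R) * y.2 ≠ 1) : ¬ (cleanGraph R).Adj x y := by
  have hee : x.1.1 * y.1.1 ≠ 0 := by rw [← he, x.1.2.1]; exact x.1.2.2
  rintro ⟨-, (⟨h, -⟩ | ⟨h, -⟩) | (⟨-, h⟩ | ⟨-, h⟩)⟩ <;> contradiction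

lemma adj_oneSubIdempotent (x : cleanVertex R) (hx : x.1.1 ≠ 1) (w : Rˣ) :
    (cleanGraph R).Adj x (oneSubIdempotent x.1 hx, w) := by
  have hidem : IsIdempotentElem x.1.1 := x.1.2.1
  refine adj_of_mul_eq_zero ?_ hidem.mul_one_sub_self hidem.one_sub_mul_self
  intro h
  exact ne_one_sub_self hidem x.1.2.2 (congrArg (·.1.1) h)

theorem dist_eq_two_of_fst_eq {x y : cleanVertex R} (hxy : x ≠ y) (he : x.1 = y.1)
    (he1 : x.1.1 ≠ 1) (huv : (x.2 : R) * y.2 ≠ 1) : (cleanGraph R).dist x y = 2 := by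
  have hx := adj_oneSubIdempotent x he1 1
  have hy := adj_oneSubIdempotent y (he ▸ he1) 1
  simp only [he] at hx
  have hedist : (cleanGraph R).edist x y = 2 :=
    SimpleGraph.edist_eq_two_iff.2 ⟨hxy, not_adj_of_fst_eq he huv, _, hx, hy⟩
  simp [SimpleGraph.dist, hedist]

end cleanGraph

theorem dist_eq_two_same_idempotent_general (n : ℕ)
    (x y : cleanVertex (ZMod n)) (hxy : x ≠ y)
    (he : x.1.1 = y.1.1) (he1 : x.1.1 ≠ 1)
    (huv : (x.2 : ZMod n) * (y.2 : ZMod n) ≠ 1) :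
    (cleanGraph (ZMod n)).dist x y = 2 :=
  cleanGraph.dist_eq_two_of_fst_eq hxy (Subtype.ext he) he1 huv

theorem dist_eq_two_same_idempotent (n : ℕ) (h : 2 ≤ n.primeFactors.card)
    (x y : cleanVertex (ZMod n)) (hxy : x ≠ y)
    (he : x.1.1 = y.1.1) (he1 : x.1.1 ≠ 1)
    (huv : (x.2 : ZMod n) * (y.2 : ZMod n) ≠ 1) :
    (cleanGraph (ZMod n)).dist x y = 2 :=
  dist_eq_two_same_idempotent_general n x y hxy he he1 huv
end

section
/- Let n have at least two distinct prime factors. In Cl₂(ZMod n), if (e,u) and (f,v) are distinct vertices with e ≠ f, e*f ≠ 0 and u*v ≠ 1, then the distance between (e,u) and (f,v) equals 2. -/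
theorem dist_eq_two_distinct_idempotents (n : ℕ) (h : 2 ≤ n.primeFactors.card)
    (x y : cleanVertex (ZMod n)) (hxy : x ≠ y)
    (he : x.1.1 ≠ y.1.1) (hef : x.1.1 * y.1.1 ≠ 0)
    (huv : (x.2 : ZMod n) * (y.2 : ZMod n) ≠ 1) :
    (cleanGraph (ZMod n)).dist x y = 2 := by
  obtain ⟨⟨e, he2, he0⟩, u⟩ := x
  obtain ⟨⟨f, hf2, hf0⟩, v⟩ := y
  simp only at he hef huv
  set x : cleanVertex (ZMod n) := ⟨⟨e, he2, he0⟩, u⟩ with hx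
  set y : cleanVertex (ZMod n) := ⟨⟨f, hf2, hf0⟩, v⟩ with hy
  have hnadj : ¬ (cleanGraph (ZMod n)).Adj x y := by
    intro hadj
    rw [cleanGraph, SimpleGraph.fromRel_adj] at hadj
    obtain ⟨-, (⟨h1, -⟩ | ⟨h1, -⟩) | (⟨h1, -⟩ | ⟨h1, -⟩)⟩ := hadj
    · exact hef h1
    · exact huv h1
    · exact hef (by rwa [mul_comm] at h1)
    · exact huv (by rwa [mul_comm] at h1)
  -- find a common neighbor w
  have hcn : ∃ w, (cleanGraph (ZMod n)).Adj x w ∧ (cleanGraph (ZMod n)).Adj w y := by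
    by_cases hf1 : f = 1
    · -- use w = (1 - e, v⁻¹)
      have hsub : e ≠ 1 := fun hh => he (hh.trans hf1.symm)
      refine ⟨⟨⟨1 - e, by linear_combination he2,
          sub_ne_zero.mpr (Ne.symm hsub)⟩, v⁻¹⟩, ?_, ?_⟩
      · rw [cleanGraph]; refine (SimpleGraph.fromRel_adj _ _ _).mpr ?_
        constructor
        · intro hcontra
          have h1 : e = 1 - e := congrArg (fun z => z.1.1) hcontra
          exact he0 (by linear_combination (-2 : ZMod n) * he2 + e * h1)
        · exact Or.inl (Or.inl ⟨by linear_combination -he2, by linear_combination -he2⟩)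
      · rw [cleanGraph]; refine (SimpleGraph.fromRel_adj _ _ _).mpr ?_
        constructor
        · intro hcontra
          have h1 : (1 : ZMod n) - e = f := congrArg (fun z => z.1.1) hcontra
          rw [hf1] at h1
          exact he0 (by linear_combination -h1)
        · exact Or.inl (Or.inr ⟨v⁻¹.mul_inv, v⁻¹.inv_mul⟩)
    · -- use w = (1 - f, u⁻¹)
      refine ⟨⟨⟨1 - f, by linear_combination hf2,
          sub_ne_zero.mpr (Ne.symm hf1)⟩, u⁻¹⟩, ?_, ?_⟩
      · rw [cleanGraph]; refine (SimpleGraph.fromRel_adj _ _ _).mpr ?_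
        constructor
        · intro hcontra
          have h1 : e = 1 - f := congrArg (fun z => z.1.1) hcontra
          exact hef (by linear_combination f * h1 - hf2)
        · exact Or.inl (Or.inr ⟨u.mul_inv, u.inv_mul⟩)
      · rw [cleanGraph]; refine (SimpleGraph.fromRel_adj _ _ _).mpr ?_
        constructor
        · intro hcontra
          have h1 : (1 : ZMod n) - f = f := congrArg (fun z => z.1.1) hcontra
          exact hf0 (by linear_combination (-2 : ZMod n) * hf2 - f * h1)
        · exact Or.inl (Or.inl ⟨by linear_combination -hf2, by linear_combination -hf2⟩)
  obtain ⟨w, hxw, hwy⟩ := hcn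
  have hwalk : ((cleanGraph (ZMod n)).Adj x w) := hxw
  have hle : (cleanGraph (ZMod n)).dist x y ≤ 2 := by
    have := SimpleGraph.dist_le (SimpleGraph.Walk.cons hxw (SimpleGraph.Walk.cons hwy SimpleGraph.Walk.nil))
    simpa using this
  have hreach : (cleanGraph (ZMod n)).Reachable x y :=
    (SimpleGraph.Walk.cons hxw (SimpleGraph.Walk.cons hwy SimpleGraph.Walk.nil)).reachable
  have hpos : 0 < (cleanGraph (ZMod n)).dist x y := hreach.pos_dist_of_ne hxy
  have hne1 : (cleanGraph (ZMod n)).dist x y ≠ 1 := fun hh =>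
    hnadj (SimpleGraph.dist_eq_one_iff_adj.mp hh)
  omega
end

section
/- Let n have at least two distinct prime factors. In Cl₂(ZMod n), if u and v are units with u ≠ v and u*v ≠ 1, then the distance between the vertices (1,u) and (1,v) equals 3. -/
lemma exists_idem_zmod (n : ℕ) (h : 2 ≤ n.primeFactors.card) :
    ∃ e : ZMod n, e * e = e ∧ e ≠ 0 ∧ e ≠ 1 := by
  obtain ⟨p, hp, q, hq, hpq⟩ := Finset.one_lt_card.mp h
  rw [Nat.mem_primeFactors] at hp hq
  obtain ⟨hp1, hpn, hn0⟩ := hp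
  obtain ⟨hq1, hqn, -⟩ := hq
  set a := p ^ n.factorization p with ha
  have hco : Nat.Coprime a (n / a) :=
    Nat.Coprime.pow_left _ (Nat.coprime_ordCompl hp1 hn0)
  have hab : a * (n / a) = n := Nat.ordProj_mul_ordCompl_eq_self n p
  have ha1 : 1 < a :=
    Nat.one_lt_pow (Nat.Prime.factorization_pos_of_dvd hp1 hn0 hpn).ne' hp1.one_lt
  have hqa : ¬ q ∣ a := by
    intro hd
    exact hpq ((Nat.prime_dvd_prime_iff_eq hq1 hp1).mp (hq1.dvd_of_dvd_pow hd)).symm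
  have hqb : q ∣ n / a := by
    have h2 : q ∣ a * (n / a) := by rw [hab]; exact hqn
    exact Nat.Coprime.dvd_of_dvd_mul_left ((Nat.Prime.coprime_iff_not_dvd hq1).mpr hqa) h2
  have hb1 : 1 < n / a :=
    lt_of_lt_of_le hq1.one_lt (Nat.le_of_dvd (Nat.ordCompl_pos p hn0) hqb)
  haveI : Fact (1 < a) := ⟨ha1⟩
  haveI : Fact (1 < n / a) := ⟨hb1⟩
  let φ : ZMod n ≃+* ZMod a × ZMod (n / a) :=
    (ZMod.ringEquivCongr hab.symm).trans (ZMod.chineseRemainder hco)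
  refine ⟨φ.symm (1, 0), ?_, ?_, ?_⟩
  · apply φ.injective
    simp [map_mul]
  · intro h0
    have := congrArg φ h0
    simp at this
  · intro h0
    have := congrArg φ h0
    simp at this

theorem dist_eq_three_idempotent_one (n : ℕ) (h : 2 ≤ n.primeFactors.card)
    (x y : cleanVertex (ZMod n))
    (hx : x.1.1 = 1) (hy : y.1.1 = 1) (hne : x.2 ≠ y.2)
    (huv : (x.2 : ZMod n) * (y.2 : ZMod n) ≠ 1) :
    (cleanGraph (ZMod n)).dist x y = 3 := by
  have hn2 : 2 ≤ n := by
    by_contra hc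
    interval_cases n <;> simp_all
  haveI : Fact (1 < n) := ⟨hn2⟩
  obtain ⟨e, he, he0, he1⟩ := exists_idem_zmod n h
  have hf : (1 - e) * (1 - e) = 1 - e := by linear_combination he
  have hf0 : (1 - e) ≠ 0 := fun hc => he1 (by linear_combination -hc)
  have hef : e * (1 - e) = 0 := by rw [mul_sub, mul_one, he, sub_self]
  have hfe : (1 - e) * e = 0 := by rw [mul_comm]; exact hef
  have hxy : x ≠ y := fun hc => hne (by rw [hc])
  let b : cleanVertex (ZMod n) := (⟨e, he, he0⟩, x.2⁻¹)
  let c : cleanVertex (ZMod n) := (⟨1 - e, hf, hf0⟩, y.2⁻¹)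
  have hadj1 : (cleanGraph (ZMod n)).Adj x b := by
    rw [cleanGraph, SimpleGraph.fromRel_adj]
    refine ⟨?_, Or.inl (Or.inr ⟨by simp [b], by simp [b]⟩)⟩
    intro hc
    have h2 := congrArg (fun z : cleanVertex (ZMod n) => z.1.1) hc
    simp only [b] at h2
    rw [hx] at h2
    exact he1 h2.symm
  have hadj2 : (cleanGraph (ZMod n)).Adj b c := by
    rw [cleanGraph, SimpleGraph.fromRel_adj]
    refine ⟨?_, Or.inl (Or.inl ⟨hef, hfe⟩)⟩
    intro hc
    have h2 := congrArg (fun z : cleanVertex (ZMod n) => z.1.1) hc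
    simp only [b, c] at h2
    refine he0 ?_
    calc e = e * e := he.symm
    _ = e * (1 - e) := by rw [← h2]
    _ = 0 := hef
  have hadj3 : (cleanGraph (ZMod n)).Adj c y := by
    rw [cleanGraph, SimpleGraph.fromRel_adj]
    refine ⟨?_, Or.inl (Or.inr ⟨by simp [c], by simp [c]⟩)⟩
    intro hc
    have h2 := congrArg (fun z : cleanVertex (ZMod n) => z.1.1) hc
    simp only [c] at h2
    rw [hy] at h2
    exact he0 (by linear_combination -h2)
  let w : (cleanGraph (ZMod n)).Walk x y :=
    SimpleGraph.Walk.cons hadj1 (SimpleGraph.Walk.cons hadj2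
      (SimpleGraph.Walk.cons hadj3 SimpleGraph.Walk.nil))
  have hreach : (cleanGraph (ZMod n)).Reachable x y := ⟨w⟩
  have hle : (cleanGraph (ZMod n)).dist x y ≤ 3 := by
    have := SimpleGraph.dist_le w
    simpa [w] using this
  have hne1 : ¬ (cleanGraph (ZMod n)).Adj x y := by
    rw [cleanGraph, SimpleGraph.fromRel_adj]
    rintro ⟨-, (⟨h2, -⟩ | ⟨h2, -⟩) | (⟨h2, -⟩ | ⟨-, h2⟩)⟩
    · rw [hx, hy, one_mul] at h2; exact one_ne_zero h2
    · exact huv h2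
    · rw [hx, hy, one_mul] at h2; exact one_ne_zero h2
    · exact huv h2
  have key : ∀ z : cleanVertex (ZMod n), (cleanGraph (ZMod n)).Adj x z →
      (x.2 : ZMod n) * (z.2 : ZMod n) = 1 := by
    intro z hz
    rw [cleanGraph, SimpleGraph.fromRel_adj] at hz
    rcases hz.2 with (⟨h2, -⟩ | ⟨h2, -⟩) | (⟨h2, -⟩ | ⟨-, h2⟩)
    · rw [hx, one_mul] at h2; exact absurd h2 z.1.2.2
    · exact h2
    · rw [hx, mul_one] at h2; exact absurd h2 z.1.2.2
    · exact h2
  have keyy : ∀ z : cleanVertex (ZMod n), (cleanGraph (ZMod n)).Adj z y →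
      (y.2 : ZMod n) * (z.2 : ZMod n) = 1 := by
    intro z hz
    rw [cleanGraph, SimpleGraph.fromRel_adj] at hz
    rcases hz.2 with (⟨h2, -⟩ | ⟨-, h2⟩) | (⟨-, h2⟩ | ⟨h2, -⟩)
    · rw [hy, mul_one] at h2; exact absurd h2 z.1.2.2
    · exact h2
    · rw [hy, mul_one] at h2; exact absurd h2 z.1.2.2
    · exact h2
  have hne2 : (cleanGraph (ZMod n)).dist x y ≠ 2 := by
    intro hd
    obtain ⟨p, hp⟩ := hreach.exists_walk_length_eq_dist
    rw [hd] at hp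
    cases p with
    | nil => simp at hp
    | cons h1 q =>
      rename_i z
      cases q with
      | nil => simp at hp
      | cons h2 r =>
        have hr : r.length = 0 := by
          simpa [SimpleGraph.Walk.length_cons] using hp
        have hcy := SimpleGraph.Walk.eq_of_length_eq_zero hr
        rw [hcy] at h2
        have e1 := key _ h1
        have e2 := keyy _ h2
        have e1' : x.2 * z.2 = 1 := Units.ext (by push_cast; exact e1)
        have e2' : y.2 * z.2 = 1 := Units.ext (by push_cast; exact e2)
        exact hne ((mul_eq_one_iff_eq_inv.mp e1').trans (mul_eq_one_iff_eq_inv.mp e2').symm)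
  have hd0 : (cleanGraph (ZMod n)).dist x y ≠ 0 := by
    simp [SimpleGraph.dist_eq_zero_iff_eq_or_not_reachable, hxy, hreach]
  have hd1 : (cleanGraph (ZMod n)).dist x y ≠ 1 := fun hd =>
    hne1 (SimpleGraph.dist_eq_one_iff_adj.mp hd)
  omega
end

section
/- Let n = p·q be a product of two distinct odd primes. Then the Wiener index of Cl₂(ZMod n) equals (17·φ(n)² − 15·φ(n) + 16)/2, where φ(n) = (p−1)(q−1). -/
open SimpleGraph

instance cleanVertexDecEq {R : Type*} [Ring R] [DecidableEq R] :
    DecidableEq (cleanVertex R) := by unfold cleanVertex; infer_instance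

instance cleanVertexFintype {R : Type*} [Ring R] [DecidableEq R] [Fintype R] :
    Fintype (cleanVertex R) := by unfold cleanVertex; infer_instance

def cdist {R : Type*} [Ring R] [DecidableEq R] (x y : cleanVertex R) : ℕ :=
  if x = y then 0
  else if x.1.1 * y.1.1 = 0 ∨ (x.2 : R) * (y.2 : R) = 1 then 1
  else if x.1.1 = 1 ∧ y.1.1 = 1 then 3 else 2

lemma clean_adj_iff {R : Type*} [CommRing R] (x y : cleanVertex R) :
    (cleanGraph R).Adj x y ↔ x ≠ y ∧ (x.1.1 * y.1.1 = 0 ∨ (x.2 : R) * (y.2 : R) = 1) := by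
  simp only [cleanGraph, SimpleGraph.fromRel_adj]
  constructor
  · rintro ⟨hne, h⟩
    refine ⟨hne, ?_⟩
    rcases h with (⟨h1, _⟩ | ⟨h1, _⟩) | (⟨h1, _⟩ | ⟨h1, _⟩)
    · exact Or.inl h1
    · exact Or.inr h1
    · exact Or.inl (by rw [mul_comm]; exact h1)
    · exact Or.inr (by rw [mul_comm]; exact h1)
  · rintro ⟨hne, h | h⟩
    · exact ⟨hne, Or.inl (Or.inl ⟨h, by rw [mul_comm]; exact h⟩)⟩
    · exact ⟨hne, Or.inl (Or.inr ⟨h, by rw [mul_comm]; exact h⟩)⟩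

section Dist

variable {R : Type*} [CommRing R] [DecidableEq R] {a b : R}

theorem cleanDist_eq (ha : a * a = a) (hb : b * b = b) (hab : a * b = 0)
    (ha0 : a ≠ 0) (hb0 : b ≠ 0)
    (hclass : ∀ e : R, e * e = e → e = 0 ∨ e = 1 ∨ e = a ∨ e = b)
    (x y : cleanVertex R) :
    (cleanGraph R).dist x y = cdist x y := by
  haveI : Nontrivial R := ⟨⟨a, 0, ha0⟩⟩
  have hba : b * a = 0 := by rw [mul_comm]; exact hab
  have ha1 : a ≠ 1 := fun h => hb0 (by rw [← hab, h, one_mul])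
  have hb1 : b ≠ 1 := fun h => ha0 (by rw [← hab, h, mul_one])
  have hane : a ≠ b := fun h => ha0 (by
    calc a = a * a := ha.symm
    _ = a * b := by rw [h]
    _ = 0 := hab)
  -- vertex builders
  let va : Rˣ → cleanVertex R := fun u => (⟨a, ha, ha0⟩, u)
  let vb : Rˣ → cleanVertex R := fun u => (⟨b, hb, hb0⟩, u)
  -- walk existence
  have hwalk : ∀ x y : cleanVertex R,
      ∃ w : (cleanGraph R).Walk x y, w.length = cdist x y := by
    intro x y
    by_cases hxy : x = y
    · subst hxy; exact ⟨Walk.nil, by simp [cdist]⟩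
    by_cases hc : x.1.1 * y.1.1 = 0 ∨ (x.2 : R) * (y.2 : R) = 1
    · exact ⟨Walk.cons ((clean_adj_iff x y).mpr ⟨hxy, hc⟩) Walk.nil,
        by simp [cdist, hxy, hc]⟩
    have hcd : cdist x y = if x.1.1 = 1 ∧ y.1.1 = 1 then 3 else 2 := by
      simp only [cdist, if_neg hxy, if_neg hc]
    have hx : x.1.1 = 1 ∨ x.1.1 = a ∨ x.1.1 = b := by
      rcases hclass x.1.1 x.1.2.1 with h | h | h | h
      exacts [absurd h x.1.2.2, Or.inl h, Or.inr (Or.inl h), Or.inr (Or.inr h)]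
    have hy : y.1.1 = 1 ∨ y.1.1 = a ∨ y.1.1 = b := by
      rcases hclass y.1.1 y.1.2.1 with h | h | h | h
      exacts [absurd h y.1.2.2, Or.inl h, Or.inr (Or.inl h), Or.inr (Or.inr h)]
    have hvne : ∀ u v : cleanVertex R, u.1.1 ≠ v.1.1 → u ≠ v :=
      fun u v h huv => h (by rw [huv])
    rcases hx with hx | hx | hx <;> rcases hy with hy | hy | hy
    · -- (1,1) : distance 3
      refine ⟨Walk.cons (v := va x.2⁻¹) ?_ (Walk.cons (v := vb y.2⁻¹) ?_ (Walk.cons ?_ Walk.nil)), ?_⟩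
      · exact (clean_adj_iff _ _).mpr
          ⟨hvne _ _ (by rw [hx]; exact Ne.symm ha1), Or.inr (by simp [va])⟩
      · exact (clean_adj_iff _ _).mpr ⟨hvne _ _ hane, Or.inl hab⟩
      · exact (clean_adj_iff _ _).mpr
          ⟨hvne _ _ (by rw [hy]; exact hb1), Or.inr (by simp [vb])⟩
      · simp [hcd, hx, hy]
    · -- (1,a)
      refine ⟨Walk.cons (v := vb x.2⁻¹) ?_ (Walk.cons ?_ Walk.nil), ?_⟩
      · exact (clean_adj_iff _ _).mpr
          ⟨hvne _ _ (by rw [hx]; exact Ne.symm hb1), Or.inr (by simp [vb])⟩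
      · exact (clean_adj_iff _ _).mpr
          ⟨hvne _ _ (by rw [hy]; exact Ne.symm hane), Or.inl (by rw [hy]; exact hba)⟩
      · simp [hcd, hy, ha1]
    · -- (1,b)
      refine ⟨Walk.cons (v := va x.2⁻¹) ?_ (Walk.cons ?_ Walk.nil), ?_⟩
      · exact (clean_adj_iff _ _).mpr
          ⟨hvne _ _ (by rw [hx]; exact Ne.symm ha1), Or.inr (by simp [va])⟩
      · exact (clean_adj_iff _ _).mpr
          ⟨hvne _ _ (by rw [hy]; exact hane), Or.inl (by rw [hy]; exact hab)⟩
      · simp [hcd, hy, hb1]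
    · -- (a,1)
      refine ⟨Walk.cons (v := vb y.2⁻¹) ?_ (Walk.cons ?_ Walk.nil), ?_⟩
      · exact (clean_adj_iff _ _).mpr
          ⟨hvne _ _ (by rw [hx]; exact hane), Or.inl (by rw [hx]; exact hab)⟩
      · exact (clean_adj_iff _ _).mpr
          ⟨hvne _ _ (by rw [hy]; exact hb1), Or.inr (by simp [vb])⟩
      · simp [hcd, hx, ha1]
    · -- (a,a)
      refine ⟨Walk.cons (v := vb x.2) ?_ (Walk.cons ?_ Walk.nil), ?_⟩
      · exact (clean_adj_iff _ _).mpr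
          ⟨hvne _ _ (by rw [hx]; exact hane), Or.inl (by rw [hx]; exact hab)⟩
      · exact (clean_adj_iff _ _).mpr
          ⟨hvne _ _ (by rw [hy]; exact Ne.symm hane), Or.inl (by rw [hy]; exact hba)⟩
      · simp [hcd, hx, ha1]
    · -- (a,b) : contradiction
      exact absurd (Or.inl (by rw [hx, hy]; exact hab)) hc
    · -- (b,1)
      refine ⟨Walk.cons (v := va y.2⁻¹) ?_ (Walk.cons ?_ Walk.nil), ?_⟩
      · exact (clean_adj_iff _ _).mpr
          ⟨hvne _ _ (by rw [hx]; exact Ne.symm hane), Or.inl (by rw [hx]; exact hba)⟩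
      · exact (clean_adj_iff _ _).mpr
          ⟨hvne _ _ (by rw [hy]; exact ha1), Or.inr (by simp [va])⟩
      · simp [hcd, hx, hb1]
    · -- (b,a) : contradiction
      exact absurd (Or.inl (by rw [hx, hy]; exact hba)) hc
    · -- (b,b)
      refine ⟨Walk.cons (v := va x.2) ?_ (Walk.cons ?_ Walk.nil), ?_⟩
      · exact (clean_adj_iff _ _).mpr
          ⟨hvne _ _ (by rw [hx]; exact Ne.symm hane), Or.inl (by rw [hx]; exact hba)⟩
      · exact (clean_adj_iff _ _).mpr
          ⟨hvne _ _ (by rw [hy]; exact hane), Or.inl (by rw [hy]; exact hab)⟩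
      · simp [hcd, hx, hb1]
  -- step lemma
  have hstep : ∀ x z y : cleanVertex R, (cleanGraph R).Adj x z →
      cdist x y ≤ cdist z y + 1 := by
    intro x z y hxz
    obtain ⟨hxzne, hxzc⟩ := (clean_adj_iff x z).mp hxz
    by_cases hxy : x = y
    · simp [cdist, hxy]
    by_cases hc : x.1.1 * y.1.1 = 0 ∨ (x.2 : R) * (y.2 : R) = 1
    · have : cdist x y = 1 := by simp only [cdist, if_neg hxy, if_pos hc]
      omega
    by_cases h11 : x.1.1 = 1 ∧ y.1.1 = 1
    · -- cdist x y = 3; show cdist z y ≥ 2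
      have h3 : cdist x y = 3 := by
        simp only [cdist, if_neg hxy, if_neg hc, if_pos h11]
      have huz : (x.2 : R) * (z.2 : R) = 1 := by
        rcases hxzc with h | h
        · rw [h11.1, one_mul] at h; exact absurd h z.1.2.2
        · exact h
      have hzy : z ≠ y := by
        intro h; subst h; exact hc (Or.inr huz)
      have hczy : ¬(z.1.1 * y.1.1 = 0 ∨ (z.2 : R) * (y.2 : R) = 1) := by
        rintro (h | h)
        · rw [h11.2, mul_one] at h; exact z.1.2.2 h
        · apply hxy
          have hval : (x.2 : R) = (y.2 : R) := by
            calc (x.2 : R) = (x.2 : R) * ((z.2 : R) * (y.2 : R)) := by rw [h, mul_one]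
            _ = ((x.2 : R) * (z.2 : R)) * (y.2 : R) := by ring
            _ = (y.2 : R) := by rw [huz, one_mul]
          have h2 : x.2 = y.2 := Units.ext hval
          have h1 : x.1 = y.1 := Subtype.ext (by rw [h11.1, h11.2])
          exact Prod.ext h1 h2
      have : 2 ≤ cdist z y := by
        simp only [cdist, if_neg hzy, if_neg hczy]
        split_ifs <;> omega
      omega
    · have h2 : cdist x y = 2 := by
        simp only [cdist, if_neg hxy, if_neg hc, if_neg h11]
      have hzy : z ≠ y := by
        intro h; subst h; exact hc hxzc
      have : 1 ≤ cdist z y := by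
        simp only [cdist, if_neg hzy]
        split_ifs <;> omega
      omega
  have hlow : ∀ (x y : cleanVertex R) (w : (cleanGraph R).Walk x y),
      cdist x y ≤ w.length := by
    intro x y w
    induction w with
    | nil => simp [cdist]
    | cons h w ih =>
      rw [Walk.length_cons]
      exact le_trans (hstep _ _ _ h) (Nat.succ_le_succ ih)
  obtain ⟨w, hw⟩ := hwalk x y
  refine le_antisymm (hw ▸ SimpleGraph.dist_le w) ?_
  obtain ⟨w', hw'⟩ := Reachable.exists_walk_length_eq_dist ⟨w⟩
  exact hw' ▸ hlow x y w'

end Dist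

lemma sum_ite_one {α : Type*} [DecidableEq α] [Fintype α] (k : α) (A C : ℕ) :
    ∑ v : α, (if v = k then A else C) = A + C * (Fintype.card α - 1) := by
  rw [← Finset.add_sum_erase _ _ (Finset.mem_univ k), if_pos rfl]
  congr 1
  rw [Finset.sum_congr rfl (fun x hx => if_neg (Finset.ne_of_mem_erase hx)),
    Finset.sum_const, Finset.card_erase_of_mem (Finset.mem_univ k), Finset.card_univ,
    smul_eq_mul, mul_comm]

lemma sum_ite_two {α : Type*} [DecidableEq α] [Fintype α] (k l : α) (hkl : k ≠ l) (A B C : ℕ) :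
    ∑ v : α, (if v = k then A else if v = l then B else C)
      = A + B + C * (Fintype.card α - 2) := by
  rw [← Finset.add_sum_erase _ _ (Finset.mem_univ k), if_pos rfl]
  have hl : l ∈ Finset.univ.erase k := Finset.mem_erase.mpr ⟨Ne.symm hkl, Finset.mem_univ l⟩
  rw [← Finset.add_sum_erase _ _ hl, if_neg (Ne.symm hkl), if_pos rfl, ← add_assoc]
  congr 1
  have hcong : ∀ x ∈ (Finset.univ.erase k).erase l,
      (if x = k then A else if x = l then B else C) = C := by
    intro x hx
    rw [if_neg (Finset.ne_of_mem_erase (Finset.mem_of_mem_erase hx)),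
      if_neg (Finset.ne_of_mem_erase hx)]
  rw [Finset.sum_congr rfl hcong, Finset.sum_const, Finset.card_erase_of_mem hl,
    Finset.card_erase_of_mem (Finset.mem_univ k), Finset.card_univ, smul_eq_mul,
    mul_comm, Nat.sub_sub]

lemma idem_cases {F : Type*} [Field F] (s : F) (h : s * s = s) : s = 0 ∨ s = 1 := by
  have h0 : s * (s - 1) = 0 := by rw [mul_sub, h, mul_one, sub_self]
  rcases mul_eq_zero.mp h0 with h' | h'
  · exact Or.inl h'
  · exact Or.inr (sub_eq_zero.mp h')

lemma cleanVertex_ext_iff {R : Type*} [Ring R] (x y : cleanVertex R) :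
    x = y ↔ (x.1.1 = y.1.1 ∧ x.2 = y.2) := by
  constructor
  · intro h; rw [h]; exact ⟨rfl, rfl⟩
  · rintro ⟨h1, h2⟩; exact Prod.ext (Subtype.ext h1) h2

lemma units_mul_eq_one_iff {R : Type*} [Monoid R] (u v : Rˣ) :
    ((u : R) * (v : R) = 1) ↔ v = u⁻¹ := by
  constructor
  · intro h
    have huv : u * v = 1 := Units.ext (by rw [Units.val_mul, h, Units.val_one])
    exact eq_inv_of_mul_eq_one_right huv
  · rintro rfl; exact Units.mul_inv u

section Param

variable {R : Type*} [CommRing R] [DecidableEq R]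

def mkV (a b : R) (h1 : (1:R)*1 = 1 ∧ (1:R) ≠ 0) (ha : a*a = a ∧ a ≠ 0)
    (hb : b*b = b ∧ b ≠ 0) (z : Fin 3 × Rˣ) : cleanVertex R :=
  (![⟨1, h1⟩, ⟨a, ha⟩, ⟨b, hb⟩] z.1, z.2)

variable {a b : R} (h1 : (1:R)*1 = 1 ∧ (1:R) ≠ 0) (ha : a*a = a ∧ a ≠ 0)
    (hb : b*b = b ∧ b ≠ 0)

lemma mkV_bijective (ha1 : a ≠ 1) (hb1 : b ≠ 1) (hane : a ≠ b)
    (hclass : ∀ e : R, e * e = e → e = 0 ∨ e = 1 ∨ e = a ∨ e = b) :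
    Function.Bijective (mkV a b h1 ha hb) := by
  constructor
  · rintro ⟨i, u⟩ ⟨j, v⟩ h
    have hfst : (mkV a b h1 ha hb (i,u)).1.1 = (mkV a b h1 ha hb (j,v)).1.1 :=
      congrArg (fun z => z.1.1) h
    have hsnd : u = v := congrArg Prod.snd h
    refine Prod.ext ?_ hsnd
    rw [cleanVertex_ext_iff] at h
    fin_cases i <;> fin_cases j <;>
      simp_all [mkV, ha1, hb1, hane, Ne.symm ha1, Ne.symm hb1, Ne.symm hane,
        cleanVertex_ext_iff, Prod.mk.injEq, Subtype.mk.injEq]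
  · rintro ⟨⟨e, hee⟩, u⟩
    rcases hclass e hee.1 with h | h | h | h
    · exact absurd h hee.2
    · exact ⟨(0, u), Prod.ext (Subtype.ext (by simp [mkV, h])) rfl⟩
    · exact ⟨(1, u), Prod.ext (Subtype.ext (by simp [mkV, h])) rfl⟩
    · exact ⟨(2, u), Prod.ext (Subtype.ext (by simp [mkV, h])) rfl⟩

lemma cdist_mkV (hab : a*b = 0) (hba : b*a = 0) (ha1 : a ≠ 1) (hb1 : b ≠ 1)
    (hane : a ≠ b) (i j : Fin 3) (u v : Rˣ) :
    cdist (mkV a b h1 ha hb (i,u)) (mkV a b h1 ha hb (j,v)) =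
      if i = j ∧ v = u then 0
      else if ((i = 1 ∧ j = 2) ∨ (i = 2 ∧ j = 1)) ∨ v = u⁻¹ then 1
      else if i = 0 ∧ j = 0 then 3 else 2 := by
  have hC1 : (mkV a b h1 ha hb (i,u) = mkV a b h1 ha hb (j,v)) ↔ (i = j ∧ v = u) := by
    rw [cleanVertex_ext_iff]
    fin_cases i <;> fin_cases j <;>
      simp [mkV, cleanVertex_ext_iff, ha1, hb1, hane,
        Ne.symm ha1, Ne.symm hb1, Ne.symm hane, eq_comm, Prod.mk.injEq, Subtype.mk.injEq]
  have hC2 : ((mkV a b h1 ha hb (i,u)).1.1 * (mkV a b h1 ha hb (j,v)).1.1 = 0)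
      ↔ ((i = 1 ∧ j = 2) ∨ (i = 2 ∧ j = 1)) := by
    fin_cases i <;> fin_cases j <;>
      simp [mkV, hab, hba, ha.1, hb.1, ha.2, hb.2, h1.2]
  have hC3 : (((mkV a b h1 ha hb (i,u)).2 : R) * ((mkV a b h1 ha hb (j,v)).2 : R) = 1)
      ↔ v = u⁻¹ := by
    simp only [mkV]
    exact units_mul_eq_one_iff u v
  have hC4 : ((mkV a b h1 ha hb (i,u)).1.1 = 1 ∧ (mkV a b h1 ha hb (j,v)).1.1 = 1)
      ↔ (i = 0 ∧ j = 0) := by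
    fin_cases i <;> fin_cases j <;> simp [mkV, ha1, hb1]
  simp only [cdist]
  rw [if_congr hC1 rfl (if_congr (or_congr hC2 hC3) rfl (if_congr hC4 rfl rfl))]

end Param

theorem wiener_index_pq (p q : ℕ) (hp : p.Prime) (hq : q.Prime)
    (hpodd : p ≠ 2) (hqodd : q ≠ 2) (hpq : p ≠ q) :
    wienerIndex (cleanGraph (ZMod (p * q))) =
      (17 * (p * q).totient ^ 2 - 15 * (p * q).totient + 16) / 2 := by
  haveI hpf : Fact p.Prime := ⟨hp⟩
  haveI hqf : Fact q.Prime := ⟨hq⟩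
  haveI : Fact (1 < p) := ⟨hp.one_lt⟩
  haveI : Fact (1 < q) := ⟨hq.one_lt⟩
  haveI : Fact (1 < p * q) := ⟨lt_of_lt_of_le hp.one_lt (Nat.le_mul_of_pos_right p hq.pos)⟩
  haveI : Fact (2 < p) := ⟨lt_of_le_of_ne hp.two_le (Ne.symm hpodd)⟩
  haveI : Fact (2 < q) := ⟨lt_of_le_of_ne hq.two_le (Ne.symm hqodd)⟩
  haveI : NeZero (p * q) := ⟨Nat.mul_ne_zero hp.pos.ne' hq.pos.ne'⟩
  have hco : Nat.Coprime p q := (Nat.coprime_primes hp hq).mpr hpq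
  set R := ZMod (p * q) with hR
  haveI : Fintype R := inferInstanceAs (Fintype (ZMod (p * q)))
  let ψ : R ≃+* ZMod p × ZMod q := ZMod.chineseRemainder hco
  have hinj := ψ.injective
  set a : R := ψ.symm (1, 0) with ha_def
  set b : R := ψ.symm (0, 1) with hb_def
  have hψa : ψ a = (1, 0) := ψ.apply_symm_apply _
  have hψb : ψ b = (0, 1) := ψ.apply_symm_apply _
  have haa : a * a = a := hinj (by
    rw [map_mul, hψa, Prod.mk_mul_mk, mul_one, mul_zero])
  have hbb : b * b = b := hinj (by
    rw [map_mul, hψb, Prod.mk_mul_mk, mul_one, mul_zero])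
  have hab : a * b = 0 := hinj (by
    rw [map_mul, hψa, hψb, Prod.mk_mul_mk, mul_zero, zero_mul, map_zero]
    rfl)
  have hba : b * a = 0 := by rw [mul_comm]; exact hab
  have ha0 : a ≠ 0 := by
    intro h
    have := congrArg Prod.fst (hψa.symm.trans (by rw [h, map_zero]) :
      ((1 : ZMod p), (0 : ZMod q)) = 0)
    exact one_ne_zero this
  have hb0 : b ≠ 0 := by
    intro h
    have := congrArg Prod.snd (hψb.symm.trans (by rw [h, map_zero]) :
      ((0 : ZMod p), (1 : ZMod q)) = 0)
    exact one_ne_zero this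
  have hclass : ∀ e : R, e * e = e → e = 0 ∨ e = 1 ∨ e = a ∨ e = b := by
    intro e he
    have h1 : (ψ e).1 * (ψ e).1 = (ψ e).1 := by rw [← Prod.fst_mul, ← map_mul, he]
    have h2 : (ψ e).2 * (ψ e).2 = (ψ e).2 := by rw [← Prod.snd_mul, ← map_mul, he]
    have he' : e = ψ.symm (ψ e) := (ψ.symm_apply_apply e).symm
    rcases idem_cases _ h1 with hs | hs <;> rcases idem_cases _ h2 with ht | ht
    · left; rw [he', show ψ e = ((0 : ZMod p), (0 : ZMod q)) from Prod.ext hs ht,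
        Prod.mk_zero_zero, map_zero]
    · right; right; right
      rw [he', show ψ e = ((0 : ZMod p), (1 : ZMod q)) from Prod.ext hs ht]
    · right; right; left
      rw [he', show ψ e = ((1 : ZMod p), (0 : ZMod q)) from Prod.ext hs ht]
    · right; left
      rw [he', show ψ e = ((1 : ZMod p), (1 : ZMod q)) from Prod.ext hs ht,
        Prod.mk_one_one, map_one]
  have ha1 : a ≠ 1 := fun h => hb0 (by rw [← hab, h, one_mul])
  have hb1 : b ≠ 1 := fun h => ha0 (by rw [← hab, h, mul_one])
  have hane : a ≠ b := fun h => ha0 (by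
    calc a = a * a := haa.symm
    _ = a * b := by rw [h]
    _ = 0 := hab)
  have h10 : (1:R) * 1 = 1 ∧ (1:R) ≠ 0 := ⟨one_mul 1, one_ne_zero⟩
  have hdist := cleanDist_eq haa hbb hab ha0 hb0 hclass
  -- units: square roots of 1
  have hw2 : (ψ.symm (1, -1) : R) * ψ.symm (1, -1) = 1 := by
    rw [← map_mul, Prod.mk_mul_mk, mul_one, neg_mul_neg, one_mul, Prod.mk_one_one, map_one]
  let U : Rˣ := ⟨ψ.symm (1, -1), ψ.symm (1, -1), hw2, hw2⟩
  have hneg1p : (-1 : ZMod p) ≠ 1 := ZMod.neg_one_ne_one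
  have hneg1q : (-1 : ZMod q) ≠ 1 := ZMod.neg_one_ne_one
  have hψ1 : ψ ((1 : Rˣ) : R) = (1, 1) := by rw [Units.val_one, map_one]; rfl
  have hψm1 : ψ ((-1 : Rˣ) : R) = (-1, -1) := by
    rw [Units.val_neg, Units.val_one, map_neg, map_one]; rfl
  have hψU : ψ ((U : Rˣ) : R) = (1, -1) := ψ.apply_symm_apply _
  have hψmU : ψ ((-U : Rˣ) : R) = (-1, 1) := by
    rw [Units.val_neg, map_neg, hψU]
    rw [Prod.neg_mk, neg_neg]
  have key : ∀ u : Rˣ, u⁻¹ = u ↔ (u = 1 ∨ u = -1 ∨ u = U ∨ u = -U) := by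
    intro u
    constructor
    · intro h
      have hu2 : (u : R) * (u : R) = 1 := by
        have := u.mul_inv
        rw [h] at this
        exact this
      have h1 : (ψ (u : R)).1 * (ψ (u : R)).1 = 1 := by
        rw [← Prod.fst_mul, ← map_mul, hu2, map_one]; rfl
      have h2 : (ψ (u : R)).2 * (ψ (u : R)).2 = 1 := by
        rw [← Prod.snd_mul, ← map_mul, hu2, map_one]; rfl
      have he' : ∀ w : Rˣ, ψ (u : R) = ψ (w : R) → u = w := by
        intro w hw
        exact Units.ext (hinj hw)
      rcases mul_self_eq_one_iff.mp h1 with hs | hs <;>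
        rcases mul_self_eq_one_iff.mp h2 with ht | ht
      · exact Or.inl (he' 1 (by rw [hψ1]; exact Prod.ext hs ht))
      · exact Or.inr (Or.inr (Or.inl (he' U (by rw [hψU]; exact Prod.ext hs ht))))
      · exact Or.inr (Or.inr (Or.inr (he' (-U) (by rw [hψmU]; exact Prod.ext hs ht))))
      · exact Or.inr (Or.inl (he' (-1) (by rw [hψm1]; exact Prod.ext hs ht)))
    · have sq1 : ∀ w : Rˣ, w * w = 1 → w⁻¹ = w := fun w hw =>
        inv_eq_of_mul_eq_one_right hw
      rintro (rfl | rfl | rfl | rfl)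
      · exact sq1 _ (by rw [one_mul])
      · exact sq1 _ (by rw [neg_mul_neg, one_mul])
      · exact sq1 _ (Units.ext hw2)
      · exact sq1 _ (by rw [neg_mul_neg]; exact Units.ext hw2)
  -- distinctness of the four involutions
  have hdis : ∀ (x y : Rˣ), ψ (x : R) ≠ ψ (y : R) → x ≠ y := by
    intro x y h hxy; exact h (by rw [hxy])
  have d12 : (1 : Rˣ) ≠ -1 := hdis _ _ (by
    rw [hψ1, hψm1]; intro h; exact hneg1p (congrArg Prod.fst h).symm)
  have d13 : (1 : Rˣ) ≠ U := hdis _ _ (by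
    rw [hψ1, hψU]; intro h; exact hneg1q (congrArg Prod.snd h).symm)
  have d14 : (1 : Rˣ) ≠ -U := hdis _ _ (by
    rw [hψ1, hψmU]; intro h; exact hneg1p (congrArg Prod.fst h).symm)
  have d23 : (-1 : Rˣ) ≠ U := hdis _ _ (by
    rw [hψm1, hψU]; intro h; exact hneg1p (congrArg Prod.fst h))
  have d24 : (-1 : Rˣ) ≠ -U := hdis _ _ (by
    rw [hψm1, hψmU]; intro h; exact hneg1q (congrArg Prod.snd h))
  have d34 : (U : Rˣ) ≠ -U := hdis _ _ (by
    rw [hψU, hψmU]; intro h; exact hneg1p (congrArg Prod.fst h).symm)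
  have hfilter : Finset.univ.filter (fun u : Rˣ => u⁻¹ = u) = {1, -1, U, -U} := by
    ext u
    simp [key u, Finset.mem_insert]
  have hf4 : (Finset.univ.filter (fun u : Rˣ => u⁻¹ = u)).card = 4 := by
    rw [hfilter]
    rw [Finset.card_insert_of_notMem (by simp [d12, d13, d14]),
      Finset.card_insert_of_notMem (by simp [d23, d24]),
      Finset.card_insert_of_notMem (by simp [d34]), Finset.card_singleton]
  set m := (Finset.univ.filter (fun u : Rˣ => ¬u⁻¹ = u)).card with hm_def
  have hcardU : Fintype.card Rˣ = m + 4 := by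
    have := Finset.card_filter_add_card_filter_not
      (s := (Finset.univ : Finset Rˣ)) (p := fun u => u⁻¹ = u)
    rw [hf4, Finset.card_univ] at this
    omega
  have htot : (p * q).totient = m + 4 := by
    rw [← ZMod.card_units_eq_totient, hcardU]
  -- sum lemmas over units
  have htop : ∀ c : ℕ, (∑ u : Rˣ, ∑ v : Rˣ, if v = u then 0 else if v = u⁻¹ then 1 else c)
      = 4 * (c * (m + 3)) + m * (1 + c * (m + 2)) := by
    intro c
    rw [← Finset.sum_filter_add_sum_filter_not Finset.univ (fun u : Rˣ => u⁻¹ = u)]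
    have e1 : ∀ u ∈ Finset.univ.filter (fun u : Rˣ => u⁻¹ = u),
        (∑ v : Rˣ, if v = u then 0 else if v = u⁻¹ then 1 else c) = c * (m + 3) := by
      intro u hu
      have hu' : u⁻¹ = u := (Finset.mem_filter.mp hu).2
      have hcong : ∀ v : Rˣ, (if v = u then (0:ℕ) else if v = u⁻¹ then 1 else c)
          = (if v = u then 0 else c) := by
        intro v
        by_cases hv : v = u
        · simp [hv]
        · rw [if_neg hv, if_neg hv, if_neg (by rw [hu']; exact hv)]
      rw [Finset.sum_congr rfl (fun v _ => hcong v), sum_ite_one u 0 c, hcardU]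
      have : m + 4 - 1 = m + 3 := by omega
      rw [this, zero_add]
    have e2 : ∀ u ∈ Finset.univ.filter (fun u : Rˣ => ¬u⁻¹ = u),
        (∑ v : Rˣ, if v = u then 0 else if v = u⁻¹ then 1 else c)
          = 1 + c * (m + 2) := by
      intro u hu
      have hu' : ¬u⁻¹ = u := (Finset.mem_filter.mp hu).2
      rw [sum_ite_two u u⁻¹ (fun h => hu' h.symm) 0 1 c, hcardU]
      have : m + 4 - 2 = m + 2 := by omega
      rw [this, zero_add]
    rw [Finset.sum_congr rfl e1, Finset.sum_congr rfl e2, Finset.sum_const,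
      Finset.sum_const, hf4, ← hm_def, smul_eq_mul, smul_eq_mul]
  have hmid : ∀ c : ℕ, (∑ u : Rˣ, ∑ v : Rˣ, if v = u⁻¹ then 1 else c)
      = (m + 4) * (1 + c * (m + 3)) := by
    intro c
    have e1 : ∀ u ∈ (Finset.univ : Finset Rˣ),
        (∑ v : Rˣ, if v = u⁻¹ then (1:ℕ) else c) = 1 + c * (m + 3) := by
      intro u _
      rw [sum_ite_one u⁻¹ 1 c, hcardU]
      have : m + 4 - 1 = m + 3 := by omega
      rw [this]
    rw [Finset.sum_congr rfl e1, Finset.sum_const, Finset.card_univ, hcardU, smul_eq_mul]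
  have hone : (∑ _u : Rˣ, ∑ _v : Rˣ, (1:ℕ)) = (m + 4) * (m + 4) := by
    simp [Finset.card_univ, hcardU]
  -- the big sum
  haveI : Fintype (cleanVertex R) := cleanVertexFintype
  have hbij := mkV_bijective h10 ⟨haa, ha0⟩ ⟨hbb, hb0⟩ ha1 hb1 hane hclass
  have hA : (∑ᶠ x : cleanVertex R, ∑ᶠ y : cleanVertex R, (cleanGraph R).dist x y)
      = 17 * (p * q).totient ^ 2 - 15 * (p * q).totient + 16 := by
    simp only [finsum_eq_sum_of_fintype]
    have hsum1 : ∀ z : Fin 3 × Rˣ,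
        (∑ z' : Fin 3 × Rˣ, cdist (mkV a b h10 ⟨haa, ha0⟩ ⟨hbb, hb0⟩ z)
          (mkV a b h10 ⟨haa, ha0⟩ ⟨hbb, hb0⟩ z'))
        = ∑ y : cleanVertex R, cdist (mkV a b h10 ⟨haa, ha0⟩ ⟨hbb, hb0⟩ z) y :=
      fun z => Fintype.sum_bijective _ hbij _ _ (fun _ => rfl)
    have hsum2 : (∑ z : Fin 3 × Rˣ, ∑ z' : Fin 3 × Rˣ,
        cdist (mkV a b h10 ⟨haa, ha0⟩ ⟨hbb, hb0⟩ z) (mkV a b h10 ⟨haa, ha0⟩ ⟨hbb, hb0⟩ z'))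
        = ∑ x : cleanVertex R, ∑ y : cleanVertex R, cdist x y :=
      Fintype.sum_bijective _ hbij _ _ (fun z => hsum1 z)
    calc (∑ x : cleanVertex R, ∑ y : cleanVertex R, (cleanGraph R).dist x y)
        = ∑ x : cleanVertex R, ∑ y : cleanVertex R, cdist x y := by
          apply Finset.sum_congr rfl; intro x _
          apply Finset.sum_congr rfl; intro y _
          exact hdist x y
      _ = ∑ z : Fin 3 × Rˣ, ∑ z' : Fin 3 × Rˣ,
            cdist (mkV a b h10 ⟨haa, ha0⟩ ⟨hbb, hb0⟩ z)
              (mkV a b h10 ⟨haa, ha0⟩ ⟨hbb, hb0⟩ z') := hsum2.symm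
      _ = 17 * (p * q).totient ^ 2 - 15 * (p * q).totient + 16 := by
          simp only [Fintype.sum_prod_type]
          simp only [show ∀ (i j : Fin 3) (u v : Rˣ),
            cdist (mkV a b h10 ⟨haa, ha0⟩ ⟨hbb, hb0⟩ (i,u))
              (mkV a b h10 ⟨haa, ha0⟩ ⟨hbb, hb0⟩ (j,v)) =
              if i = j ∧ v = u then 0
              else if ((i = 1 ∧ j = 2) ∨ (i = 2 ∧ j = 1)) ∨ v = u⁻¹ then 1
              else if i = 0 ∧ j = 0 then 3 else 2
            from cdist_mkV h10 ⟨haa, ha0⟩ ⟨hbb, hb0⟩ hab hba ha1 hb1 hane]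
          rw [Fin.sum_univ_three]
          simp only [Fin.sum_univ_three]
          norm_num
          simp only [Fin.reduceEq, false_and, and_false, false_or, if_false, ite_false]
          simp only [Finset.sum_add_distrib]
          rw [htop 3, htop 2, hmid 2, hone]
          rw [htot]
          have h1 : 17*(m+4)^2 = 17*m^2+136*m+272 := by ring
          rw [h1]
          have h2 : 17*m^2+136*m+272 - 15*(m+4) + 16 = 17*m^2+121*m+228 := by
            generalize m^2 = K
            omega
          rw [h2]
          ring
  rw [wienerIndex, hA]
end
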